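/- Let λ be a self-conjugate partition with heights (a_1,...,a_r) and let H_1,...,H_r be the formal power series over ℚ defined by H_j(z) = Σ_{k≥0} C_k^{λ,i} z^{k+1} where i is any index with block f_λ(i) = j and C_k^{λ,i} counts λ-plane trees on k+1 vertices whose root is labelled i. Then these series satisfy H_j = z + H_j · (a_1 H_1 + ... + a_{r−j+1} H_{r−j+1}) for all j ∈ [r]. -/

import Mathlib

/-!
Cutting a `λ`-plane tree rooted at `i` at the edge from its root to the leftmost child leaves a
tree rooted at `i` and a tree rooted at some `j ≤ λ_i`. Hence the generating function `T_i` of trees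
rooted at `i` satisfies `T_i = z + T_i (T_1 + ⋯ + T_{λ_i})`. For `i` in block `j` we have
`λ_i = a_1 + ⋯ + a_{r-j+1}`, so the labels `1, …, λ_i` are exactly blocks `1, …, r - j + 1`, and
block `m` contributes `a_m` labels, all with generating function `H_m`.
-/

def cellMem (L : ℕ → ℕ) (i j : ℕ) : Prop := 1 ≤ i ∧ 1 ≤ j ∧ j ≤ L i

def IsPartitionOfLength (L : ℕ → ℕ) (l : ℕ) : Prop :=
  (∀ i j, 1 ≤ i → i ≤ j → L j ≤ L i) ∧ ∀ i, 1 ≤ i → (1 ≤ L i ↔ i ≤ l)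

def SelfConjugate (L : ℕ → ℕ) : Prop := ∀ i j, cellMem L i j ↔ cellMem L j i

inductive LTree where
  | node : ℕ → List LTree → LTree

namespace LTree

def label : LTree → ℕ
  | node a _ => a

def size : LTree → ℕ
  | node _ ts => 1 + (ts.attach.map (fun t => size t.1)).sum
decreasing_by
  have := List.sizeOf_lt_of_mem t.2
  simp only [node.sizeOf_spec]
  omega

def countLabel (i : ℕ) : LTree → ℕ
  | node a ts => (if a = i then 1 else 0) + (ts.attach.map (fun t => countLabel i t.1)).sum
decreasing_by
  have := List.sizeOf_lt_of_mem t.2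
  simp only [node.sizeOf_spec]
  omega

def Valid (P : ℕ → ℕ → Prop) : LTree → Prop
  | node a ts => ∀ t ∈ ts, P a t.label ∧ Valid P t
decreasing_by
  rename_i ht
  have := List.sizeOf_lt_of_mem ht
  simp only [node.sizeOf_spec]
  omega

def LabelsLe (l : ℕ) : LTree → Prop
  | node a ts => (1 ≤ a ∧ a ≤ l) ∧ ∀ t ∈ ts, LabelsLe l t
decreasing_by
  rename_i ht
  have := List.sizeOf_lt_of_mem ht
  simp only [node.sizeOf_spec]
  omega

end LTree

/-- A `λ`-plane tree: labels in `[1, l]` and every edge `{u, v}` satisfies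
`(c u, c v) ∈ λ`. -/
def IsLambdaPlaneTree (L : ℕ → ℕ) (l : ℕ) (t : LTree) : Prop :=
  LTree.LabelsLe l t ∧ LTree.Valid (fun u v => cellMem L u v) t

/-- An `r`-plane tree: labels in `[1, r]` and every edge `{u, v}` satisfies
`c u + c v ≤ r + 1`. -/
def IsRPlaneTree (r : ℕ) (t : LTree) : Prop :=
  LTree.LabelsLe r t ∧ LTree.Valid (fun u v => u + v ≤ r + 1) t

/-- `C_k^λ`: the number of `λ`-plane trees on `k + 1` vertices. -/
noncomputable def lambdaPlaneCount (L : ℕ → ℕ) (l k : ℕ) : ℕ :=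
  Nat.card {t : LTree // t.size = k + 1 ∧ IsLambdaPlaneTree L l t}

/-- The number of `r`-plane trees on `k + 1` vertices. -/
noncomputable def rPlaneCount (r k : ℕ) : ℕ :=
  Nat.card {t : LTree // t.size = k + 1 ∧ IsRPlaneTree r t}

open Finset PowerSeries

theorem List.finite_setOf_length_le_forall_mem {α : Type*} {s : Set α} (hs : s.Finite)
    (N : ℕ) : {ts : List α | ts.length ≤ N ∧ ∀ t ∈ ts, t ∈ s}.Finite := by
  have := hs.to_subtype
  refine ((List.finite_length_le s N).image (List.map Subtype.val)).subset ?_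
  rintro ts ⟨hlen, hmem⟩
  lift ts to List s using hmem
  exact ⟨ts, by simpa using hlen, rfl⟩

namespace LTree

theorem size_node (a : ℕ) (ts : List LTree) : (node a ts).size = 1 + (ts.map size).sum := by
  rw [size]; simp

theorem one_le_size (t : LTree) : 1 ≤ t.size := by
  cases t with | node a ts => rw [size_node]; omega

theorem size_node_cons (a : ℕ) (u : LTree) (ts : List LTree) :
    (node a (u :: ts)).size = (node a ts).size + u.size := by
  rw [size_node, size_node, List.map_cons, List.sum_cons]; omega

theorem length_lt_size (a : ℕ) (ts : List LTree) : ts.length < (node a ts).size := by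
  have : ts.length ≤ (ts.map size).sum := by
    simpa using List.length_le_sum_of_one_le (ts.map size) (by simp [one_le_size])
  rw [size_node]; omega

theorem size_lt_size_of_mem {a : ℕ} {ts : List LTree} {t : LTree} (ht : t ∈ ts) :
    t.size < (node a ts).size := by
  have := List.single_le_sum (fun _ _ => Nat.zero_le _) _ (List.mem_map_of_mem (f := size) ht)
  rw [size_node]; omega

theorem labelsLe_node (l a : ℕ) (ts : List LTree) :
    LabelsLe l (node a ts) ↔ (1 ≤ a ∧ a ≤ l) ∧ ∀ t ∈ ts, LabelsLe l t := by
  rw [LabelsLe]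

theorem valid_node (P : ℕ → ℕ → Prop) (a : ℕ) (ts : List LTree) :
    Valid P (node a ts) ↔ ∀ t ∈ ts, P a t.label ∧ Valid P t := by
  rw [Valid]

theorem finite_setOf_size_le_labelsLe (l N : ℕ) :
    {t : LTree | t.size ≤ N ∧ LabelsLe l t}.Finite := by
  induction N with
  | zero => exact Set.finite_empty.subset fun t ht => Nat.not_succ_le_zero 0 ((one_le_size t).trans ht.1)
  | succ N ih =>
    refine (((Set.finite_Icc 1 l).prod (List.finite_setOf_length_le_forall_mem ih N)).image
      fun p => node p.1 p.2).subset ?_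
    rintro ⟨a, ts⟩ ⟨hsize, hlab⟩
    rw [labelsLe_node] at hlab
    refine ⟨(a, ts), ⟨hlab.1, ?_, fun t ht => ⟨?_, hlab.2 t ht⟩⟩, rfl⟩
    · have := length_lt_size a ts; dsimp only; omega
    · have := size_lt_size_of_mem (a := a) (ts := ts) ht; omega

/-- Attach `u` to the root of `v` as its leftmost subtree. -/
def graft : LTree × LTree → LTree
  | (node a ts, u) => node a (u :: ts)

theorem graft_injective : Function.Injective graft := by
  rintro ⟨⟨a, ts⟩, u⟩ ⟨⟨a', ts'⟩, u'⟩ h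
  simp only [graft, node.injEq, List.cons.injEq] at h
  obtain ⟨rfl, rfl, rfl⟩ := h
  rfl

end LTree

open LTree

theorem IsLambdaPlaneTree.one_le_label {L : ℕ → ℕ} {l : ℕ} {t : LTree}
    (ht : IsLambdaPlaneTree L l t) : 1 ≤ t.label := by
  cases t with | node a ts => exact ((labelsLe_node l a ts).1 ht.1).1.1

theorem isLambdaPlaneTree_node_nil {L : ℕ → ℕ} {l a : ℕ} :
    IsLambdaPlaneTree L l (node a []) ↔ 1 ≤ a ∧ a ≤ l := by
  simp [IsLambdaPlaneTree, labelsLe_node, valid_node]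

theorem isLambdaPlaneTree_node_cons {L : ℕ → ℕ} {l a : ℕ} {u : LTree} {ts : List LTree} :
    IsLambdaPlaneTree L l (node a (u :: ts)) ↔
      cellMem L a u.label ∧ IsLambdaPlaneTree L l u ∧ IsLambdaPlaneTree L l (node a ts) := by
  simp only [IsLambdaPlaneTree, labelsLe_node, valid_node, List.forall_mem_cons]
  tauto

def rootedTrees (L : ℕ → ℕ) (l i n : ℕ) : Set LTree :=
  {t | t.size = n + 1 ∧ IsLambdaPlaneTree L l t ∧ t.label = i}

section rootedTrees

variable (L : ℕ → ℕ) (l : ℕ)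

theorem rootedTrees_finite (i n : ℕ) : (rootedTrees L l i n).Finite :=
  (finite_setOf_size_le_labelsLe l (n + 1)).subset fun _ ⟨hsize, ht, _⟩ => ⟨hsize.le, ht.1⟩

theorem rootedTrees_zero {i : ℕ} (hi : 1 ≤ i ∧ i ≤ l) : rootedTrees L l i 0 = {node i []} := by
  ext ⟨a, ts⟩
  simp only [rootedTrees, Set.mem_ofPred_eq, Set.mem_singleton_iff, node.injEq]
  cases ts with
  | nil =>
    simp only [size_node, List.map_nil, List.sum_nil, isLambdaPlaneTree_node_nil, label, and_true]
    exact ⟨fun h => h.2.2, fun h => ⟨rfl, h ▸ hi, h⟩⟩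
  | cons u ts =>
    simp only [reduceCtorEq, and_false, iff_false, size_node_cons]
    have := one_le_size u
    have := one_le_size (node a ts)
    omega

def graftPairs (i k : ℕ) : Set (LTree × LTree) :=
  ⋃ x ∈ antidiagonal k ×ˢ Icc 1 (L i), rootedTrees L l i x.1.1 ×ˢ rootedTrees L l x.2 x.1.2

theorem graft_image_graftPairs (i k : ℕ) :
    graft '' graftPairs L l i k = rootedTrees L l i (k + 1) := by
  ext t
  simp only [graftPairs, Set.mem_image, Set.mem_iUnion, Set.mem_prod, mem_product,
    HasAntidiagonal.mem_antidiagonal, mem_Icc, exists_prop, Prod.exists]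
  constructor
  · rintro ⟨⟨a, ts⟩, u, ⟨p, q, j, ⟨hpq, hj⟩, ⟨hvsize, hv, rfl⟩, husize, hu, rfl⟩, rfl⟩
    refine ⟨by rw [graft, size_node_cons]; omega, ?_, rfl⟩
    exact isLambdaPlaneTree_node_cons.2 ⟨⟨hv.one_le_label, hj⟩, hu, hv⟩
  · rintro ⟨hsize, ht, rfl⟩
    obtain ⟨a, _ | ⟨u, ts⟩⟩ := t
    · simp [size_node] at hsize
    obtain ⟨hcell, hu, hv⟩ := isLambdaPlaneTree_node_cons.1 ht
    rw [size_node_cons] at hsize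
    have := one_le_size u
    have := one_le_size (node a ts)
    exact ⟨node a ts, u, ⟨(node a ts).size - 1, u.size - 1, u.label, ⟨by omega, hcell.2⟩,
      ⟨by omega, hv, rfl⟩, ⟨by omega, hu, rfl⟩⟩, rfl⟩

/-- Cut the edge from the root to its leftmost child. -/
theorem ncard_rootedTrees_succ (i k : ℕ) :
    (rootedTrees L l i (k + 1)).ncard = ∑ x ∈ antidiagonal k,
      (rootedTrees L l i x.1).ncard * ∑ j ∈ Icc 1 (L i), (rootedTrees L l j x.2).ncard := by
  rw [← graft_image_graftPairs, Set.ncard_image_of_injective _ graft_injective, graftPairs,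
    ← set_biUnion_coe, Set.Finite.ncard_biUnion (finite_toSet _)
      (fun x _ => (rootedTrees_finite L l _ _).prod (rootedTrees_finite L l _ _)),
    finsum_mem_coe_finset, sum_product]
  · simp only [Set.ncard_prod, mul_sum]
  · rintro ⟨⟨p, q⟩, j⟩ hx ⟨⟨p', q'⟩, j'⟩ hx' hne
    rw [Function.onFun, Set.disjoint_left]
    rintro ⟨v, u⟩ ⟨⟨hv, -⟩, hu, -, rfl⟩ ⟨⟨hv', -⟩, hu', -, hj⟩
    simp only [coe_product, Set.mem_prod, mem_coe, HasAntidiagonal.mem_antidiagonal]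
      at hx hx' hv hv' hu hu'
    simp only [ne_eq, Prod.mk.injEq] at hne hj
    omega

noncomputable def treeGF (i : ℕ) : PowerSeries ℚ :=
  X * PowerSeries.mk fun n => ((rootedTrees L l i n).ncard : ℚ)

theorem treeGF_eq {i : ℕ} (hi : 1 ≤ i ∧ i ≤ l) :
    treeGF L l i = X + treeGF L l i * ∑ j ∈ Icc 1 (L i), treeGF L l j := by
  simp only [treeGF, ← mul_sum]
  suffices h : (PowerSeries.mk fun n => ((rootedTrees L l i n).ncard : ℚ)) =
      1 + X * ((PowerSeries.mk fun n => ((rootedTrees L l i n).ncard : ℚ)) *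
        ∑ j ∈ Icc 1 (L i), PowerSeries.mk fun n => ((rootedTrees L l j n).ncard : ℚ)) by
    conv_lhs => rw [h]
    ring
  ext (_ | k)
  · simp [rootedTrees_zero L l hi]
  · rw [coeff_mk, ncard_rootedTrees_succ, map_add, coeff_succ_X_mul, coeff_mul]
    simp [map_sum]

theorem eq_treeGF_of_coeff {F : PowerSeries ℚ} {i : ℕ} (h0 : coeff 0 F = 0)
    (h : ∀ n, coeff (n + 1) F =
      (Nat.card {t : LTree // t.size = n + 1 ∧ IsLambdaPlaneTree L l t ∧ t.label = i} : ℚ)) :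
    F = treeGF L l i := by
  ext (_ | n)
  · simp [treeGF, h0]
  · rw [h, treeGF, coeff_succ_X_mul, coeff_mk, ← Nat.card_coe_set_eq]
    rfl

end rootedTrees

section Blocks

variable (a : ℕ → ℕ)

theorem monotone_sum_Icc_one : Monotone fun n => ∑ k ∈ Icc 1 n, a k :=
  fun _ _ h => sum_le_sum_of_subset (Icc_subset_Icc_right h)

theorem sum_Icc_one_sub_one_add {m : ℕ} (hm : 1 ≤ m) :
    ∑ k ∈ Icc 1 (m - 1), a k + a m = ∑ k ∈ Icc 1 m, a k := by
  obtain ⟨m, rfl⟩ := Nat.exists_eq_add_of_le' hm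
  simpa using (sum_Icc_succ_top (by omega) a).symm

theorem card_Ioc_sum_Icc_one {m : ℕ} (hm : 1 ≤ m) :
    #(Ioc (∑ k ∈ Icc 1 (m - 1), a k) (∑ k ∈ Icc 1 m, a k)) = a m := by
  rw [Nat.card_Ioc, ← sum_Icc_one_sub_one_add a hm]
  omega

theorem eq_of_mem_Ioc_sum_Icc_one {i m m' : ℕ}
    (h : i ∈ Ioc (∑ k ∈ Icc 1 (m - 1), a k) (∑ k ∈ Icc 1 m, a k))
    (h' : i ∈ Ioc (∑ k ∈ Icc 1 (m' - 1), a k) (∑ k ∈ Icc 1 m', a k)) : m = m' := by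
  rw [mem_Ioc] at h h'
  by_contra hne
  rcases Nat.lt_or_gt_of_ne hne with hlt | hlt
  · have : ∑ k ∈ Icc 1 m, a k ≤ ∑ k ∈ Icc 1 (m' - 1), a k := monotone_sum_Icc_one a (by omega)
    omega
  · have : ∑ k ∈ Icc 1 m', a k ≤ ∑ k ∈ Icc 1 (m - 1), a k := monotone_sum_Icc_one a (by omega)
    omega

theorem sum_Icc_sum_Icc_one_eq_sum_sum_Ioc {M : Type*} [AddCommMonoid M] (F : ℕ → M) (q : ℕ) :
    ∑ i ∈ Icc 1 (∑ k ∈ Icc 1 q, a k), F i =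
      ∑ m ∈ Icc 1 q, ∑ i ∈ Ioc (∑ k ∈ Icc 1 (m - 1), a k) (∑ k ∈ Icc 1 m, a k), F i := by
  have hIoc (n : ℕ) : Icc 1 n = Ioc 0 n := Icc_succ_left_eq_Ioc 0 n
  induction q with
  | zero => simp
  | succ q ih =>
    rw [sum_Icc_succ_top (M := M) (by omega), ← ih, Nat.add_sub_cancel,
      hIoc (∑ k ∈ Icc 1 (q + 1), a k), hIoc (∑ k ∈ Icc 1 q, a k)]
    exact (sum_Ioc_consecutive F (Nat.zero_le _) (monotone_sum_Icc_one a q.le_succ)).symm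

end Blocks

theorem stmt15_general (r : ℕ) (a : ℕ → ℕ)
    (ha : ∀ n, 1 ≤ n → n ≤ r → 1 ≤ a n)
    (l : ℕ) (hl : l = ∑ m ∈ Finset.Icc 1 r, a m)
    (L f : ℕ → ℕ)
    (hL : ∀ n i, 1 ≤ n → n ≤ r → (∑ m ∈ Finset.Icc 1 (n - 1), a m) < i →
        i ≤ ∑ m ∈ Finset.Icc 1 n, a m → L i = ∑ m ∈ Finset.Icc 1 (r - n + 1), a m)
    (hf : ∀ i, 1 ≤ i → i ≤ l →
        (∑ m ∈ Finset.Icc 1 (f i - 1), a m) < i ∧ i ≤ ∑ m ∈ Finset.Icc 1 (f i), a m)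
    (H : ℕ → PowerSeries ℚ)
    (hH0 : ∀ j, PowerSeries.coeff (R := ℚ) 0 (H j) = 0)
    (hHcoeff : ∀ i, 1 ≤ i → i ≤ l → ∀ n : ℕ,
        PowerSeries.coeff (R := ℚ) (n + 1) (H (f i)) =
          (Nat.card {t : LTree // t.size = n + 1 ∧ IsLambdaPlaneTree L l t ∧ t.label = i} : ℚ)) :
    ∀ j, 1 ≤ j → j ≤ r →
      H j = PowerSeries.X +
        H j * ∑ m ∈ Finset.Icc 1 (r - j + 1), PowerSeries.C (R := ℚ) ((a m : ℚ)) * H m := by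
  intro j hj hjr
  have hlabel : ∀ m ≤ r, ∀ i ∈ Ioc (∑ k ∈ Icc 1 (m - 1), a k) (∑ k ∈ Icc 1 m, a k),
      1 ≤ i ∧ i ≤ l := fun m hm i hi =>
    ⟨Nat.one_le_of_lt (mem_Ioc.1 hi).1, hl ▸ (mem_Ioc.1 hi).2.trans (monotone_sum_Icc_one a hm)⟩
  have hblock : ∀ m ≤ r, ∀ i ∈ Ioc (∑ k ∈ Icc 1 (m - 1), a k) (∑ k ∈ Icc 1 m, a k),
      treeGF L l i = H m := by
    intro m hm i hi
    obtain ⟨hi1, hil⟩ := hlabel m hm i hi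
    rw [← eq_of_mem_Ioc_sum_Icc_one a (mem_Ioc.2 (hf i hi1 hil)) hi]
    exact (eq_treeGF_of_coeff L l (hH0 _) (hHcoeff i hi1 hil)).symm
  set i₀ := ∑ k ∈ Icc 1 j, a k
  have hi₀ : i₀ ∈ Ioc (∑ k ∈ Icc 1 (j - 1), a k) i₀ := by
    have := sum_Icc_one_sub_one_add a hj
    have := ha j hj hjr
    exact mem_Ioc.2 ⟨by omega, le_rfl⟩
  have hLi₀ : L i₀ = ∑ k ∈ Icc 1 (r - j + 1), a k := hL j i₀ hj hjr (mem_Ioc.1 hi₀).1 le_rfl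
  calc H j = treeGF L l i₀ := (hblock j hjr i₀ hi₀).symm
    _ = X + treeGF L l i₀ * ∑ i ∈ Icc 1 (L i₀), treeGF L l i :=
      treeGF_eq L l (hlabel j hjr i₀ hi₀)
    _ = X + H j * ∑ m ∈ Icc 1 (r - j + 1), C (a m : ℚ) * H m := by
      rw [hblock j hjr i₀ hi₀, hLi₀, sum_Icc_sum_Icc_one_eq_sum_sum_Ioc]
      refine congrArg (X + H j * ·) (sum_congr rfl fun m hm => ?_)
      rw [mem_Icc] at hm
      rw [sum_congr rfl (hblock m (by omega)), sum_const, card_Ioc_sum_Icc_one a hm.1,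
        nsmul_eq_mul, map_natCast]

/-- The generating functions `H_j` of `λ`-plane trees rooted at a label of block `j`
satisfy `H_j = z + H_j · (a₁ H₁ + ⋯ + a_{r-j+1} H_{r-j+1})`. -/
theorem stmt15 (r : ℕ) (hr : 1 ≤ r) (a : ℕ → ℕ)
    (ha : ∀ n, 1 ≤ n → n ≤ r → 1 ≤ a n)
    (l : ℕ) (hl : l = ∑ m ∈ Finset.Icc 1 r, a m)
    (L f : ℕ → ℕ)
    (hL : ∀ n i, 1 ≤ n → n ≤ r → (∑ m ∈ Finset.Icc 1 (n - 1), a m) < i →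
        i ≤ ∑ m ∈ Finset.Icc 1 n, a m → L i = ∑ m ∈ Finset.Icc 1 (r - n + 1), a m)
    (hL0 : ∀ i, l < i → L i = 0)
    (hf : ∀ i, 1 ≤ i → i ≤ l →
        (∑ m ∈ Finset.Icc 1 (f i - 1), a m) < i ∧ i ≤ ∑ m ∈ Finset.Icc 1 (f i), a m)
    (H : ℕ → PowerSeries ℚ)
    (hH0 : ∀ j, PowerSeries.coeff (R := ℚ) 0 (H j) = 0)
    (hHcoeff : ∀ i, 1 ≤ i → i ≤ l → ∀ n : ℕ,
        PowerSeries.coeff (R := ℚ) (n + 1) (H (f i)) =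
          (Nat.card {t : LTree // t.size = n + 1 ∧ IsLambdaPlaneTree L l t ∧ t.label = i} : ℚ)) :
    ∀ j, 1 ≤ j → j ≤ r →
      H j = PowerSeries.X +
        H j * ∑ m ∈ Finset.Icc 1 (r - j + 1), PowerSeries.C (R := ℚ) ((a m : ℚ)) * H m :=
  stmt15_general r a ha l hl L f hL hf H hH0 hHcoeff
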